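/- Let n be an integer with n ≡ 1 (mod 4) and n ≥ 5, and let m be an integer with m ≥ 3n − 2. Then for all pairwise distinct integers a, b, c, d ∈ {1, …, m} that all have the same parity (all odd or all even), the product of disjoint transpositions (a, b)(c, d) belongs to C(n, m). -/

import Mathlib

/-- The underlying function of the `n`-crossing permutation `π_j` over `{1, …, m}` (as a
function on `ℕ`): it sends `j + k` to `j + n - 1 - k` for `0 ≤ k ≤ n - 1` and fixes all
other points. -/
def crossFun (n j i : ℕ) : ℕ :=
  if j ≤ i ∧ i < j + n then 2 * j + n - 1 - i else i

lemma crossFun_involutive (n j : ℕ) : Function.Involutive (crossFun n j) := by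
  intro i
  unfold crossFun
  split_ifs <;> omega

/-- The `n`-crossing permutation `π_j`, viewed as a permutation of `ℕ` fixing every point
outside `{j, …, j + n - 1}`. -/
def crossPerm (n j : ℕ) : Equiv.Perm ℕ :=
  Function.Involutive.toPerm _ (crossFun_involutive n j)

/-- `C n m` is the subgroup of the symmetric group `S_m` (realized as permutations of `ℕ`
supported on `{1, …, m}`) generated by the `n`-crossing permutations `π_1, …, π_{m-n+1}`. -/
def C (n m : ℕ) : Subgroup (Equiv.Perm ℕ) :=
  Subgroup.closure {σ | ∃ j, 1 ≤ j ∧ j ≤ m - n + 1 ∧ σ = crossPerm n j}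

/-!
Writing `π_j` for the crossings, `π_{j+1} π_{j+2} π_{j+1} π_j` is the 3-cycle
`(j, j+n+1, j+n-1)`. Conjugating these 3-cycles by one another and multiplying them gives every
3-cycle `(x, x+2, x+4)` in `{1, …, m}`, and such consecutive 3-cycles of a parity class generate
all 3-cycles of that class. Finally `(a b)(c d) = (a c b)(a c d)`.
-/

open Equiv Function

section Cycle3

variable {α : Type*} [DecidableEq α]

/-- The 3-cycle `x ↦ y ↦ z ↦ x`. -/
def cycle3 (x y z : α) : Perm α := swap x z * swap x y

variable {x y z : α}

theorem cycle3_apply_left (hxy : x ≠ y) (hyz : y ≠ z) : cycle3 x y z x = y := by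
  simp [cycle3, swap_apply_of_ne_of_ne hxy.symm hyz]

theorem cycle3_apply_mid : cycle3 x y z y = z := by
  simp [cycle3]

theorem cycle3_apply_right (hxz : x ≠ z) (hyz : y ≠ z) : cycle3 x y z z = x := by
  simp [cycle3, swap_apply_of_ne_of_ne hxz.symm hyz.symm]

theorem cycle3_apply_of_ne {w : α} (hx : w ≠ x) (hy : w ≠ y) (hz : w ≠ z) :
    cycle3 x y z w = w := by
  simp [cycle3, swap_apply_of_ne_of_ne, *]

theorem cycle3_inv (x y z : α) : (cycle3 x y z)⁻¹ = cycle3 x z y := by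
  simp [cycle3]

theorem cycle3_rotate (hxz : x ≠ z) (hyz : y ≠ z) : cycle3 y z x = cycle3 x y z := by
  ext w
  simp only [cycle3, Perm.mul_apply, swap_apply_def]
  grind

theorem cycle3_mul_cycle3 (p a q r : α) : cycle3 p r q * cycle3 p a r = cycle3 p a q := by
  simp [cycle3, mul_assoc]

theorem swap_mul_swap_eq_cycle3_mul_cycle3 {a b c d : α} (had : a ≠ d) (hcd : c ≠ d) :
    swap a b * swap c d = cycle3 a c b * cycle3 a c d := by
  rw [cycle3, cycle3, mul_assoc, ← mul_assoc (swap a c) (swap a d), swap_comm a d,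
    swap_mul_swap_mul_swap had.symm hcd.symm]

variable {H : Subgroup (Perm α)}

theorem cycle3_mem_inv_iff : cycle3 x z y ∈ H ↔ cycle3 x y z ∈ H := by
  rw [← cycle3_inv, inv_mem_iff]

theorem cycle3_mem_rotate_iff (hxz : x ≠ z) (hyz : y ≠ z) :
    cycle3 y z x ∈ H ↔ cycle3 x y z ∈ H := by
  rw [cycle3_rotate hxz hyz]

theorem cycle3_mem_of_conj {σ : Perm α} {x' y' z' : α} (hσ : σ ∈ H) (h : cycle3 x y z ∈ H)
    (hx : σ x = x') (hy : σ y = y') (hz : σ z = z') : cycle3 x' y' z' ∈ H := by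
  have hconj : σ * cycle3 x y z * σ⁻¹ = cycle3 x' y' z' := by
    rw [cycle3, cycle3, ← hx, ← hy, ← hz, swap_apply_apply, swap_apply_apply]
    group
  exact hconj ▸ mul_mem (mul_mem hσ h) (inv_mem hσ)

section Chain

variable {f : ℕ → α} {N : ℕ}

theorem cycle3_mem_of_lt (hf : Injective f)
    (hcons : ∀ k, k + 2 < N → cycle3 (f k) (f (k + 1)) (f (k + 2)) ∈ H) {i j k : ℕ}
    (hij : i < j) (hjk : j < k) (hkN : k < N) : cycle3 (f i) (f j) (f k) ∈ H := by
  induction k generalizing i j with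
  | zero => omega
  | succ k ih =>
    obtain rfl | hik := (by omega : k = i + 1 ∨ i + 2 ≤ k)
    · obtain rfl : j = i + 1 := by omega
      exact hcons i hkN
    obtain ⟨l, rfl⟩ : ∃ l, k = l + 1 := ⟨k - 1, by omega⟩
    have ht := hcons l hkN
    obtain rfl | rfl | hjl := (by omega : j = l + 1 ∨ j = l ∨ j < l)
    · exact cycle3_mem_of_conj ht (ih (j := l) (by omega) (by omega) (by omega))
        (cycle3_apply_of_ne (hf.ne (by omega)) (hf.ne (by omega)) (hf.ne (by omega)))
        (cycle3_apply_left (hf.ne (by omega)) (hf.ne (by omega))) cycle3_apply_mid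
    · have ht' : cycle3 (f j) (f (j + 2)) (f (j + 1)) ∈ H := cycle3_mem_inv_iff.mpr ht
      have hprev : cycle3 (f i) (f (j + 1)) (f j) ∈ H :=
        cycle3_mem_inv_iff.mpr (ih (by omega) (by omega) (by omega))
      exact cycle3_mem_of_conj ht' hprev
        (cycle3_apply_of_ne (hf.ne (by omega)) (hf.ne (by omega)) (hf.ne (by omega)))
        (cycle3_apply_right (hf.ne (by omega)) (hf.ne (by omega)))
        (cycle3_apply_left (hf.ne (by omega)) (hf.ne (by omega)))
    · exact cycle3_mem_of_conj ht (ih hij (by omega) (by omega))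
        (cycle3_apply_of_ne (hf.ne (by omega)) (hf.ne (by omega)) (hf.ne (by omega)))
        (cycle3_apply_of_ne (hf.ne (by omega)) (hf.ne (by omega)) (hf.ne (by omega)))
        cycle3_apply_mid

theorem cycle3_mem_of_injective (hf : Injective f)
    (hcons : ∀ k, k + 2 < N → cycle3 (f k) (f (k + 1)) (f (k + 2)) ∈ H) {i j k : ℕ}
    (hiN : i < N) (hjN : j < N) (hkN : k < N) (hij : i ≠ j) (hik : i ≠ k) (hjk : j ≠ k) :
    cycle3 (f i) (f j) (f k) ∈ H := by
  suffices hmin : ∀ {a b c}, a < b → a < c → b ≠ c → b < N → c < N →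
      cycle3 (f a) (f b) (f c) ∈ H by
    rcases (by omega : i < j ∧ i < k ∨ j < i ∧ j < k ∨ k < i ∧ k < j) with h | h | h
    · exact hmin h.1 h.2 hjk hjN hkN
    · exact (cycle3_mem_rotate_iff (hf.ne hik) (hf.ne hjk)).mp (hmin h.2 h.1 hik.symm hkN hiN)
    · exact (cycle3_mem_rotate_iff (hf.ne hjk.symm) (hf.ne hij)).mpr (hmin h.1 h.2 hij hiN hjN)
  intro a b c hab hac hbc hbN hcN
  rcases hbc.lt_or_gt with hbc | hcb
  · exact cycle3_mem_of_lt hf hcons hab hbc hcN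
  · exact cycle3_mem_inv_iff.mp (cycle3_mem_of_lt hf hcons hac hcb hbN)

end Chain

end Cycle3

section Crossing

variable {n m : ℕ}

theorem crossPerm_mem_C {j : ℕ} (hj : 1 ≤ j) (hjm : j + n ≤ m + 1) : crossPerm n j ∈ C n m :=
  Subgroup.subset_closure ⟨j, hj, by omega, rfl⟩

-- `π_{j+1} π_{j+2} π_{j+1}` agrees with `π_j` except that it fixes `j` and swaps `j + n - 1`
-- with `j + n + 1`.
set_option maxHeartbeats 1000000 in
theorem crossPerm_conj_mul_crossPerm (hn : 2 ≤ n) (j : ℕ) :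
    crossPerm n (j + 1) * crossPerm n (j + 2) * crossPerm n (j + 1) * crossPerm n j =
      cycle3 j (j + n + 1) (j + n - 1) := by
  ext i
  simp only [Perm.mul_apply, crossPerm, Involutive.coe_toPerm, crossFun, cycle3, swap_apply_def]
  split_ifs <;> omega

theorem cycle3_mem_C {j : ℕ} (hn : 2 ≤ n) (hj : 1 ≤ j) (hjm : j + n + 1 ≤ m) :
    cycle3 j (j + n + 1) (j + n - 1) ∈ C n m := by
  rw [← crossPerm_conj_mul_crossPerm hn]
  refine mul_mem (mul_mem (mul_mem ?_ ?_) ?_) ?_ <;> exact crossPerm_mem_C (by omega) (by omega)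

theorem cycle3_add_two_mem_C {j : ℕ} (hn : 4 ≤ n) (hj : 1 ≤ j) (hjm : j + n + 3 ≤ m) :
    cycle3 j (j + 2) (j + n - 1) ∈ C n m := by
  have hc : cycle3 (j + 2) (j + n + 3) (j + n + 1) ∈ C n m := by
    convert cycle3_mem_C (n := n) (m := m) (j := j + 2) (by omega) (by omega) (by omega)
      using 2 <;> omega
  exact cycle3_mem_of_conj hc (cycle3_mem_C (by omega) hj (by omega))
    (cycle3_apply_of_ne (by omega) (by omega) (by omega)) (cycle3_apply_right (by omega) (by omega))
    (cycle3_apply_of_ne (by omega) (by omega) (by omega))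

theorem cycle3_consecutive_mem_C_of_le {x : ℕ} (hn : 4 ≤ n) (hx : n ≤ x) (hxm : x + 4 ≤ m) :
    cycle3 x (x + 2) (x + 4) ∈ C n m := by
  obtain ⟨j, hj, rfl⟩ : ∃ j, 1 ≤ j ∧ x = j + n - 1 := ⟨x + 1 - n, by omega, by omega⟩
  rw [show j + n - 1 + 2 = j + n + 1 by omega, show j + n - 1 + 4 = j + n + 3 by omega]
  have hc : cycle3 j (j + n + 1) (j + n - 1) ∈ C n m := cycle3_mem_C (by omega) hj (by omega)
  have hc' : cycle3 (j + 2) (j + n + 1) (j + n + 3) ∈ C n m := by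
    rw [← cycle3_mem_inv_iff]
    convert cycle3_mem_C (n := n) (m := m) (j := j + 2) (by omega) (by omega) (by omega)
      using 2 <;> omega
  have hu : cycle3 j (j + n + 3) (j + n - 1) ∈ C n m :=
    cycle3_mem_of_conj hc' hc (cycle3_apply_of_ne (by omega) (by omega) (by omega))
      cycle3_apply_mid (cycle3_apply_of_ne (by omega) (by omega) (by omega))
  rw [← cycle3_mul_cycle3 _ _ _ j]
  exact mul_mem ((cycle3_mem_rotate_iff (by omega) (by omega)).mp hu)
    ((cycle3_mem_rotate_iff (by omega) (by omega)).mpr (cycle3_mem_inv_iff.mpr hc))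

theorem cycle3_consecutive_mem_C_of_lt {x : ℕ} (hn : 5 ≤ n) (hm : 3 * n - 2 ≤ m) (hx : 1 ≤ x)
    (hxn : x < n) : cycle3 x (x + 2) (x + 4) ∈ C n m := by
  have hd : cycle3 x (x + 2) (x + n - 1) ∈ C n m :=
    cycle3_add_two_mem_C (by omega) hx (by omega)
  obtain rfl | hn6 := (by omega : n = 5 ∨ 6 ≤ n)
  · simpa using hd
  have hd' : cycle3 (x + 2) (x + 4) (x + n + 1) ∈ C n m := by
    convert cycle3_add_two_mem_C (n := n) (m := m) (j := x + 2) (by omega) (by omega) (by omega)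
      using 2
    omega
  have hw : cycle3 x (x + 4) (x + n - 1) ∈ C n m :=
    cycle3_mem_of_conj hd' hd (cycle3_apply_of_ne (by omega) (by omega) (by omega))
      (cycle3_apply_left (by omega) (by omega))
      (cycle3_apply_of_ne (by omega) (by omega) (by omega))
  rw [← cycle3_mul_cycle3 _ _ _ (x + n - 1)]
  exact mul_mem (cycle3_mem_inv_iff.mpr hw) hd

theorem cycle3_consecutive_mem_C {x : ℕ} (hn : 5 ≤ n) (hm : 3 * n - 2 ≤ m) (hx : 1 ≤ x)
    (hxm : x + 4 ≤ m) : cycle3 x (x + 2) (x + 4) ∈ C n m := by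
  rcases lt_or_ge x n with hxn | hxn
  · exact cycle3_consecutive_mem_C_of_lt hn hm hx hxn
  · exact cycle3_consecutive_mem_C_of_le (by omega) hxn hxm

theorem cycle3_mem_C_of_parity (hn : 5 ≤ n) (hm : 3 * n - 2 ≤ m) {x y z : ℕ}
    (hx : 1 ≤ x) (hxm : x ≤ m) (hy : 1 ≤ y) (hym : y ≤ m) (hz : 1 ≤ z) (hzm : z ≤ m)
    (hxy : x ≠ y) (hxz : x ≠ z) (hyz : y ≠ z) (hxy2 : x % 2 = y % 2) (hyz2 : y % 2 = z % 2) :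
    cycle3 x y z ∈ C n m := by
  obtain ⟨r, hr1, hr2, hrx⟩ : ∃ r, 1 ≤ r ∧ r ≤ 2 ∧ r % 2 = x % 2 :=
    ⟨2 - x % 2, by omega, by omega, by omega⟩
  obtain ⟨i, rfl⟩ : ∃ i, x = r + 2 * i := ⟨(x - r) / 2, by omega⟩
  obtain ⟨j, rfl⟩ : ∃ j, y = r + 2 * j := ⟨(y - r) / 2, by omega⟩
  obtain ⟨k, rfl⟩ : ∃ k, z = r + 2 * k := ⟨(z - r) / 2, by omega⟩
  have hf : Injective (fun l ↦ r + 2 * l) := fun a b h ↦ by simp only at h; omega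
  refine cycle3_mem_of_injective (N := (m - r) / 2 + 1) hf (fun l hl ↦ ?_)
    (by omega) (by omega) (by omega) (by omega) (by omega) (by omega)
  convert cycle3_consecutive_mem_C (x := r + 2 * l) hn hm (by omega) (by omega) using 2 <;> omega

end Crossing

theorem stmt10_general (n : ℕ) (hn5 : 5 ≤ n)
    (m : ℕ) (hm : 3 * n - 2 ≤ m)
    (a b c d : ℕ)
    (ha1 : 1 ≤ a) (ham : a ≤ m) (hb1 : 1 ≤ b) (hbm : b ≤ m)
    (hc1 : 1 ≤ c) (hcm : c ≤ m) (hd1 : 1 ≤ d) (hdm : d ≤ m)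
    (hab : a ≠ b) (hac : a ≠ c) (had : a ≠ d)
    (hbc : b ≠ c) (hcd : c ≠ d)
    (hpar : a % 2 = b % 2 ∧ b % 2 = c % 2 ∧ c % 2 = d % 2) :
    Equiv.swap a b * Equiv.swap c d ∈ C n m := by
  obtain ⟨hab2, hbc2, hcd2⟩ := hpar
  rw [swap_mul_swap_eq_cycle3_mul_cycle3 had hcd]
  exact mul_mem
    (cycle3_mem_C_of_parity hn5 hm ha1 ham hc1 hcm hb1 hbm hac hab hbc.symm (by omega) hbc2.symm)
    (cycle3_mem_C_of_parity hn5 hm ha1 ham hc1 hcm hd1 hdm hac had hcd (by omega) hcd2)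

theorem stmt10 (n : ℕ) (hn : n % 4 = 1) (hn5 : 5 ≤ n)
    (m : ℕ) (hm : 3 * n - 2 ≤ m)
    (a b c d : ℕ)
    (ha1 : 1 ≤ a) (ham : a ≤ m) (hb1 : 1 ≤ b) (hbm : b ≤ m)
    (hc1 : 1 ≤ c) (hcm : c ≤ m) (hd1 : 1 ≤ d) (hdm : d ≤ m)
    (hab : a ≠ b) (hac : a ≠ c) (had : a ≠ d)
    (hbc : b ≠ c) (hbd : b ≠ d) (hcd : c ≠ d)
    (hpar : a % 2 = b % 2 ∧ b % 2 = c % 2 ∧ c % 2 = d % 2) :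
    Equiv.swap a b * Equiv.swap c d ∈ C n m :=
  stmt10_general n hn5 m hm a b c d ha1 ham hb1 hbm hc1 hcm hd1 hdm hab hac had hbc hcd hpar
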